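/- There is a universal constant C > 0 such that the following holds. Let f be L-smooth and (γ, μ)-strongly-quasar-convex with respect to a global minimizer x*, let R ≥ ‖x₀ − x*‖, σ > 0, and suppose T is large enough that the step size α = (1/(μγT)) log(μ²γ²R²T/(2σ²)) satisfies 0 < α ≤ γ/L and γμα ≤ 1 and that μ²γ²R²T ≥ 2eσ². Then SGD run for T iterations with this step size satisfies E[f(x_T) − f(x*)] ≤ C (Lσ²/(μ²γ²T)) (1 + log(μγR√T/σ)). -/

import Mathlib

/-!
Expected squared distance to the minimizer contracts along SGD: the stochastic gradient is
unbiased given the past, so strong quasar-convexity gives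
`E⟪g_t, x_t - x*⟫ ≥ γ E[f(x_t) - f(x*)] + (γμ/2) E‖x_t - x*‖²`, while the conditional variance
bound and `‖∇f‖² ≤ 2L(f - f(x*))` give `E‖g_t‖² ≤ σ² + 2L E[f(x_t) - f(x*)]`. With `αL ≤ γ` the
function-value terms cancel, leaving `a_{t+1} ≤ (1 - γμα) a_t + α²σ²` for
`a_t = E‖x_t - x*‖²`. Smoothness converts `a_T` into the function gap, and the prescribed step
size is exactly the one making `(1 - γμα)^T R² ≤ exp(-γμαT) R² = 2σ²/(μ²γ²T)`.
-/

open MeasureTheory Finset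
open scoped RealInnerProductSpace

section Smooth

variable {E : Type*} [NormedAddCommGroup E] [InnerProductSpace ℝ E] [CompleteSpace E]
  {f : E → ℝ} {f' : E → E} {L : ℝ}

theorem IsLocalMin.hasGradientAt_eq_zero {a g : E} (h : IsLocalMin f a)
    (hf : HasGradientAt f g a) : g = 0 := by
  simpa using h.hasFDerivAt_eq_zero hf.hasFDerivAt

theorem le_add_inner_add_sq_of_lipschitz_gradient (hf : ∀ y, HasGradientAt f (f' y) y)
    (hL : ∀ y z, ‖f' y - f' z‖ ≤ L * ‖y - z‖) (x y : E) :
    f y ≤ f x + ⟪f' x, y - x⟫ + L / 2 * ‖y - x‖ ^ 2 := by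
  set v := y - x
  -- The Lipschitz bound makes `ψ` antitone on `[0, ∞)`, and `ψ 1 ≤ ψ 0` is the claim.
  let ψ : ℝ → ℝ := fun t => f (x + t • v) - t * ⟪f' x, v⟫ - L / 2 * t ^ 2 * ‖v‖ ^ 2
  have hψ : ∀ t, HasDerivAt ψ (⟪f' (x + t • v), v⟫ - ⟪f' x, v⟫ - L * t * ‖v‖ ^ 2) t := by
    intro t
    have hline : HasDerivAt (fun s : ℝ => x + s • v) v t := by
      simpa using ((hasDerivAt_id t).smul_const v).const_add x
    have hφ : HasDerivAt (fun s : ℝ => f (x + s • v)) ⟪f' (x + t • v), v⟫ t := by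
      have h := (hf (x + t • v)).hasFDerivAt.comp_hasDerivAt t hline
      simp only [InnerProductSpace.toDual_apply_apply] at h
      exact h
    refine ((hφ.sub ((hasDerivAt_id t).mul_const ⟪f' x, v⟫)).sub
      (((hasDerivAt_pow 2 t).const_mul (L / 2)).mul_const (‖v‖ ^ 2))).congr_deriv ?_
    simp only [Nat.cast_ofNat]
    ring
  have hψ_nonpos : ∀ t ∈ interior (Set.Ici (0 : ℝ)),
      ⟪f' (x + t • v), v⟫ - ⟪f' x, v⟫ - L * t * ‖v‖ ^ 2 ≤ 0 := by
    intro t ht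
    rw [interior_Ici, Set.mem_Ioi] at ht
    have hlip : ‖f' (x + t • v) - f' x‖ ≤ L * (t * ‖v‖) := by
      simpa [norm_smul, abs_of_pos ht] using hL (x + t • v) x
    have hcs := real_inner_le_norm (f' (x + t • v) - f' x) v
    rw [inner_sub_left] at hcs
    nlinarith [mul_le_mul_of_nonneg_right hlip (norm_nonneg v)]
  have hψ01 : ψ 1 ≤ ψ 0 := antitoneOn_of_hasDerivWithinAt_nonpos (convex_Ici 0)
    (fun t _ => (hψ t).continuousAt.continuousWithinAt) (fun t _ => (hψ t).hasDerivWithinAt)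
    hψ_nonpos Set.self_mem_Ici (show (1 : ℝ) ∈ Set.Ici 0 by norm_num) zero_le_one
  simp only [ψ, v, zero_smul, add_zero, one_smul, add_sub_cancel, zero_mul, sub_zero, one_pow,
    mul_one, one_mul] at hψ01
  linarith

theorem norm_sq_gradient_le_of_lipschitz_gradient (hf : ∀ y, HasGradientAt f (f' y) y)
    (hL : ∀ y z, ‖f' y - f' z‖ ≤ L * ‖y - z‖) (hL0 : 0 < L) {xstar : E}
    (hmin : ∀ y, f xstar ≤ f y) (y : E) : ‖f' y‖ ^ 2 ≤ 2 * L * (f y - f xstar) := by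
  have h := le_add_inner_add_sq_of_lipschitz_gradient hf hL y (y - L⁻¹ • f' y)
  rw [sub_sub_cancel_left, inner_neg_right, real_inner_smul_right, real_inner_self_eq_norm_sq,
    norm_neg, norm_smul, Real.norm_of_nonneg (inv_nonneg.2 hL0.le)] at h
  have h' : ‖f' y‖ ^ 2 / (2 * L) ≤ f y - f xstar := by
    have : f (y - L⁻¹ • f' y) ≤ f y - ‖f' y‖ ^ 2 / (2 * L) :=
      h.trans_eq (by field_simp; ring)
    linarith [hmin (y - L⁻¹ • f' y)]
  rwa [div_le_iff₀ (by positivity), mul_comm] at h'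

theorem sub_le_half_mul_norm_sq_of_lipschitz_gradient (hf : ∀ y, HasGradientAt f (f' y) y)
    (hL : ∀ y z, ‖f' y - f' z‖ ≤ L * ‖y - z‖) {xstar : E}
    (hmin : ∀ y, f xstar ≤ f y) (y : E) : f y - f xstar ≤ L / 2 * ‖y - xstar‖ ^ 2 := by
  have h := le_add_inner_add_sq_of_lipschitz_gradient hf hL xstar y
  have hlocal : IsLocalMin f xstar := Filter.Eventually.of_forall hmin
  rw [hlocal.hasGradientAt_eq_zero (hf xstar), inner_zero_left] at h
  linarith

end Smooth

theorem inner_ge_of_stronglyQuasarConvex {E : Type*} [NormedAddCommGroup E]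
    [InnerProductSpace ℝ E] {f : E → ℝ} {f' : E → E} {xstar y : E} {γ μ : ℝ} (hγ : 0 < γ)
    (h : f xstar ≥ f y + (1 / γ) * ⟪f' y, xstar - y⟫ + (μ / 2) * ‖y - xstar‖ ^ 2) :
    γ * (f y - f xstar) + γ * μ / 2 * ‖y - xstar‖ ^ 2 ≤ ⟪f' y, y - xstar⟫ := by
  rw [← neg_sub y xstar, inner_neg_right] at h
  have := mul_le_mul_of_nonneg_left h hγ.le
  field_simp at this
  linarith

theorem le_pow_mul_add_of_le_mul_add {a : ℕ → ℝ} {c d A K : ℝ} (hc : 0 ≤ c)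
    (hK : c * K + d ≤ K) (h0 : a 0 ≤ A + K) (hstep : ∀ t, a (t + 1) ≤ c * a t + d) (t : ℕ) :
    a t ≤ c ^ t * A + K := by
  induction t with
  | zero => simpa using h0
  | succ t ih =>
    calc a (t + 1) ≤ c * (c ^ t * A + K) + d := (hstep t).trans (by gcongr)
      _ ≤ c ^ (t + 1) * A + K := by rw [pow_succ]; linarith

section Expectation

variable {Ω E : Type*} {m mΩ : MeasurableSpace Ω} {P : Measure Ω}
  [NormedAddCommGroup E] [InnerProductSpace ℝ E]

theorem integrable_inner_of_integrable_norm_sq {u v : Ω → E} (hu : AEStronglyMeasurable u P)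
    (hv : AEStronglyMeasurable v P) (hu2 : Integrable (fun ω => ‖u ω‖ ^ 2) P)
    (hv2 : Integrable (fun ω => ‖v ω‖ ^ 2) P) : Integrable (fun ω => ⟪u ω, v ω⟫) P :=
  memLp_one_iff_integrable.1 <| (innerSL ℝ : E →L[ℝ] E →L[ℝ] ℝ).memLp_of_bilin (p := 2) (q := 2) 1
    ((memLp_two_iff_integrable_sq_norm hu).2 hu2) ((memLp_two_iff_integrable_sq_norm hv).2 hv2)

theorem integral_inner_eq_of_condExp_eq [CompleteSpace E] (hm : m ≤ mΩ) [SigmaFinite (P.trim hm)]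
    {g G h : Ω → E} (hg : Integrable g P) (hgh : Integrable (fun ω => ⟪g ω, h ω⟫) P)
    (hh : StronglyMeasurable[m] h) (hG : P[g | m] =ᵐ[P] G) :
    ∫ ω, ⟪g ω, h ω⟫ ∂P = ∫ ω, ⟪G ω, h ω⟫ ∂P := by
  have hpull : P[fun ω => ⟪g ω, h ω⟫ | m] =ᵐ[P] fun ω => ⟪P[g | m] ω, h ω⟫ :=
    condExp_bilin_of_stronglyMeasurable_right (innerSL ℝ) hh hgh hg
  rw [← integral_condExp hm]
  refine integral_congr_ae ?_
  filter_upwards [hpull, hG] with ω h1 h2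
  rw [h1, h2]

theorem integral_le_of_ae_condExp_le [IsProbabilityMeasure P] (hm : m ≤ mΩ) {h : Ω → ℝ} {c : ℝ}
    (hc : ∀ᵐ ω ∂P, P[h | m] ω ≤ c) : ∫ ω, h ω ∂P ≤ c := by
  have : IsFiniteMeasure (P.trim hm) := isFiniteMeasure_trim hm
  calc ∫ ω, h ω ∂P = ∫ ω, P[h | m] ω ∂P := (integral_condExp hm).symm
    _ ≤ ∫ _, c ∂P := integral_mono_ae integrable_condExp (integrable_const c) hc
    _ = c := by simp

theorem integral_norm_sub_sq {u v : Ω → E} (hu : AEStronglyMeasurable u P)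
    (hv : AEStronglyMeasurable v P) (hu2 : Integrable (fun ω => ‖u ω‖ ^ 2) P)
    (hv2 : Integrable (fun ω => ‖v ω‖ ^ 2) P) :
    ∫ ω, ‖u ω - v ω‖ ^ 2 ∂P
      = ∫ ω, ‖u ω‖ ^ 2 ∂P - 2 * ∫ ω, ⟪u ω, v ω⟫ ∂P + ∫ ω, ‖v ω‖ ^ 2 ∂P := by
  have huv := integrable_inner_of_integrable_norm_sq hu hv hu2 hv2
  have h2uv : Integrable (fun ω => 2 * ⟪u ω, v ω⟫) P := huv.const_mul 2
  have hsub : Integrable (fun ω => ‖u ω‖ ^ 2 - 2 * ⟪u ω, v ω⟫) P := hu2.sub h2uv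
  simp_rw [norm_sub_sq_real]
  rw [integral_add hsub hv2, integral_sub hu2 h2uv, integral_const_mul]

theorem integral_norm_sq_eq_add_of_condExp_eq [CompleteSpace E] [IsFiniteMeasure P]
    (hm : m ≤ mΩ) {G F : Ω → E} (hG : Integrable G P) (hG2 : Integrable (fun ω => ‖G ω‖ ^ 2) P)
    (hF : StronglyMeasurable[m] F) (hF2 : Integrable (fun ω => ‖F ω‖ ^ 2) P)
    (hGF : P[G | m] =ᵐ[P] F) :
    ∫ ω, ‖G ω‖ ^ 2 ∂P = ∫ ω, ‖G ω - F ω‖ ^ 2 ∂P + ∫ ω, ‖F ω‖ ^ 2 ∂P := by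
  have : IsFiniteMeasure (P.trim hm) := isFiniteMeasure_trim hm
  have hFm : AEStronglyMeasurable F P := (hF.mono hm).aestronglyMeasurable
  have hcross : ∫ ω, ⟪G ω, F ω⟫ ∂P = ∫ ω, ‖F ω‖ ^ 2 ∂P := by
    rw [integral_inner_eq_of_condExp_eq hm hG
      (integrable_inner_of_integrable_norm_sq hG.1 hFm hG2 hF2) hF hGF]
    simp_rw [real_inner_self_eq_norm_sq]
  rw [integral_norm_sub_sq hG.1 hFm hG2 hF2, hcross]
  ring

theorem integral_norm_sq_sgd_step_le [CompleteSpace E] [IsProbabilityMeasure P] (hm : m ≤ mΩ)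
    {f : E → ℝ} {f' : E → E} {xstar : E} {L γ μ σ α : ℝ} (hf' : Continuous f')
    (hquasar : ∀ y, γ * (f y - f xstar) + γ * μ / 2 * ‖y - xstar‖ ^ 2 ≤ ⟪f' y, y - xstar⟫)
    (hgrad_sq : ∀ y, ‖f' y‖ ^ 2 ≤ 2 * L * (f y - f xstar)) (hmin : ∀ y, f xstar ≤ f y)
    (hα : 0 ≤ α) (hαL : α * L ≤ γ) {X G : Ω → E} (hX : StronglyMeasurable[m] X)
    (hG : Integrable G P) (hG2 : Integrable (fun ω => ‖G ω‖ ^ 2) P)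
    (hGX : P[G | m] =ᵐ[P] fun ω => f' (X ω))
    (hvar : ∀ᵐ ω ∂P, P[fun ω => ‖G ω - f' (X ω)‖ ^ 2 | m] ω ≤ σ ^ 2)
    (hfX : Integrable (fun ω => f (X ω)) P) (hX2 : Integrable (fun ω => ‖X ω - xstar‖ ^ 2) P) :
    ∫ ω, ‖X ω - α • G ω - xstar‖ ^ 2 ∂P
      ≤ (1 - γ * μ * α) * ∫ ω, ‖X ω - xstar‖ ^ 2 ∂P + α ^ 2 * σ ^ 2 := by
  set a := ∫ ω, ‖X ω - xstar‖ ^ 2 ∂P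
  set b := ∫ ω, f (X ω) ∂P - f xstar
  have hgap : Integrable (fun ω => f (X ω) - f xstar) P := hfX.sub (integrable_const _)
  have hb_eq : ∫ ω, (f (X ω) - f xstar) ∂P = b := by simp [b, integral_sub hfX]
  have hb : 0 ≤ b := by
    rw [← hb_eq]; exact integral_nonneg fun ω => sub_nonneg.2 (hmin (X ω))
  have hY : StronglyMeasurable[m] fun ω => X ω - xstar := hX.sub stronglyMeasurable_const
  have hYm : AEStronglyMeasurable (fun ω => X ω - xstar) P := (hY.mono hm).aestronglyMeasurable
  have hF : StronglyMeasurable[m] fun ω => f' (X ω) := hf'.comp_stronglyMeasurable hX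
  have hFm : AEStronglyMeasurable (fun ω => f' (X ω)) P := (hF.mono hm).aestronglyMeasurable
  have hF2 : Integrable (fun ω => ‖f' (X ω)‖ ^ 2) P :=
    (hgap.const_mul (2 * L)).mono' (hFm.norm.pow 2) (ae_of_all _ fun ω => by
      simpa only [norm_pow, norm_norm] using hgrad_sq (X ω))
  have hfirst : γ * b + γ * μ / 2 * a ≤ ∫ ω, ⟪G ω, X ω - xstar⟫ ∂P := by
    rw [integral_inner_eq_of_condExp_eq hm hG
      (integrable_inner_of_integrable_norm_sq hG.1 hYm hG2 hX2) hY hGX, ← hb_eq,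
      ← integral_const_mul, ← integral_const_mul, ← integral_add (hgap.const_mul _)
      (hX2.const_mul _)]
    exact integral_mono ((hgap.const_mul _).add (hX2.const_mul _))
      (integrable_inner_of_integrable_norm_sq hFm hYm hF2 hX2) fun ω => hquasar (X ω)
  have hsecond : ∫ ω, ‖G ω‖ ^ 2 ∂P ≤ σ ^ 2 + 2 * L * b := by
    rw [integral_norm_sq_eq_add_of_condExp_eq hm hG hG2 hF hF2 hGX, ← hb_eq,
      ← integral_const_mul]
    exact add_le_add (integral_le_of_ae_condExp_le hm hvar)
      (integral_mono hF2 (hgap.const_mul _) fun ω => hgrad_sq (X ω))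
  have hexpand : ∫ ω, ‖X ω - α • G ω - xstar‖ ^ 2 ∂P
      = a - 2 * α * ∫ ω, ⟪G ω, X ω - xstar⟫ ∂P + α ^ 2 * ∫ ω, ‖G ω‖ ^ 2 ∂P := by
    have hαG2 : Integrable (fun ω => ‖α • G ω‖ ^ 2) P := by
      simpa only [norm_smul, mul_pow] using hG2.const_mul (‖α‖ ^ 2)
    simp_rw [sub_right_comm _ (α • _) xstar]
    rw [integral_norm_sub_sq (v := fun ω => α • G ω) hYm (hG.1.const_smul α) hX2 hαG2]
    simp_rw [real_inner_smul_right, real_inner_comm (X _ - xstar), norm_smul, mul_pow,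
      Real.norm_eq_abs, sq_abs, integral_const_mul]
    ring
  rw [hexpand]
  nlinarith [mul_le_mul_of_nonneg_left hfirst hα, mul_le_mul_of_nonneg_left hsecond (sq_nonneg α),
    mul_nonneg (mul_nonneg hα (sub_nonneg.2 hαL)) hb]

end Expectation

section History

variable {Ω E : Type*} {mΩ : MeasurableSpace Ω} [MeasurableSpace E]

abbrev gradientHistory (g : ℕ → Ω → E) (t : ℕ) : MeasurableSpace Ω :=
  ⨆ i ∈ range t, MeasurableSpace.comap (g i) inferInstance

theorem gradientHistory_le {g : ℕ → Ω → E} (hg : ∀ t, Measurable (g t)) (t : ℕ) :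
    gradientHistory g t ≤ mΩ :=
  iSup₂_le fun i _ => (hg i).comap_le

theorem gradientHistory_mono (g : ℕ → Ω → E) : Monotone (gradientHistory g) :=
  fun _ _ hst => biSup_mono fun _ hi => mem_range.2 ((mem_range.1 hi).trans_le hst)

theorem measurable_gradientHistory_succ (g : ℕ → Ω → E) (t : ℕ) :
    Measurable[gradientHistory g (t + 1)] (g t) :=
  measurable_iff_comap_le.2 <| le_iSup₂ (f := fun i (_ : i ∈ range (t + 1)) =>
    MeasurableSpace.comap (g i) inferInstance) t (self_mem_range_succ t)

theorem stronglyMeasurable_sgd_iterate [NormedAddCommGroup E] [NormedSpace ℝ E] [BorelSpace E]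
    [SecondCountableTopology E] {x g : ℕ → Ω → E} {x₀ : E} {α : ℝ} (hx0 : x 0 = fun _ => x₀)
    (hstep : ∀ t, x (t + 1) = fun ω => x t ω - α • g t ω) (t : ℕ) :
    StronglyMeasurable[gradientHistory g t] (x t) := by
  induction t with
  | zero => rw [hx0]; exact stronglyMeasurable_const
  | succ t ih =>
    rw [hstep t]
    exact (ih.mono (gradientHistory_mono g t.le_succ)).sub
      ((measurable_gradientHistory_succ g t).stronglyMeasurable.const_smul α)

end History

theorem sgd_bound_le_of_step_size {L γ μ σ R α : ℝ} {T : ℕ} (hL : 0 ≤ L) (hγ : 0 < γ)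
    (hμ : 0 < μ) (hσ : 0 < σ) (hpos : 0 < μ ^ 2 * γ ^ 2 * R ^ 2 * (T : ℝ))
    (hαdef : α = (1 / (μ * γ * (T : ℝ))) * Real.log (μ ^ 2 * γ ^ 2 * R ^ 2 * (T : ℝ) / (2 * σ ^ 2)))
    (hα2 : γ * μ * α ≤ 1) :
    L / 2 * ((1 - γ * μ * α) ^ T * R ^ 2 + α * σ ^ 2 / (μ * γ))
      ≤ L * σ ^ 2 / (μ ^ 2 * γ ^ 2 * (T : ℝ)) * (1 + Real.log (μ * γ * R * Real.sqrt T / σ)) := by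
  set W := μ ^ 2 * γ ^ 2 * R ^ 2 * (T : ℝ) / (2 * σ ^ 2) with hW
  have hW0 : 0 < W := by positivity
  have hT : (T : ℝ) ≠ 0 := by rintro h; simp [h] at hpos
  have hR : R ≠ 0 := by rintro rfl; simp at hpos
  have hrate : γ * μ * α * T = Real.log W := by rw [hαdef]; field_simp
  have hcontract : (1 - γ * μ * α) ^ T * R ^ 2 ≤ 2 * σ ^ 2 / (μ ^ 2 * γ ^ 2 * T) := by
    calc (1 - γ * μ * α) ^ T * R ^ 2 ≤ Real.exp (-(γ * μ * α)) ^ T * R ^ 2 := by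
          gcongr
          exact Real.one_sub_le_exp_neg _
      _ = W⁻¹ * R ^ 2 := by
          rw [← Real.exp_nat_mul, mul_neg, mul_comm (T : ℝ), hrate, Real.exp_neg, Real.exp_log hW0]
      _ = 2 * σ ^ 2 / (μ ^ 2 * γ ^ 2 * T) := by rw [hW]; field_simp
  have hnoise : α * σ ^ 2 / (μ * γ) = Real.log W * (σ ^ 2 / (μ ^ 2 * γ ^ 2 * T)) := by
    rw [← hrate]; field_simp
  set s := μ * γ * R * Real.sqrt T / σ
  have hlog : Real.log W ≤ 2 * Real.log s := by
    have hWs : W ≤ s ^ 2 := by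
      rw [div_pow, mul_pow, mul_pow, mul_pow, Real.sq_sqrt (Nat.cast_nonneg T), hW]
      exact div_le_div_of_nonneg_left hpos.le (by positivity) (by linarith [sq_nonneg σ])
    calc Real.log W ≤ Real.log (s ^ 2) := Real.log_le_log hW0 hWs
      _ = 2 * Real.log s := by rw [Real.log_pow]; norm_num
  calc L / 2 * ((1 - γ * μ * α) ^ T * R ^ 2 + α * σ ^ 2 / (μ * γ))
      ≤ L / 2 * (2 * σ ^ 2 / (μ ^ 2 * γ ^ 2 * T)
          + 2 * Real.log s * (σ ^ 2 / (μ ^ 2 * γ ^ 2 * T))) := by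
        rw [hnoise]; gcongr
    _ = L * σ ^ 2 / (μ ^ 2 * γ ^ 2 * (T : ℝ)) * (1 + Real.log s) := by ring

theorem sgd_integral_sub_le_of_stronglyQuasarConvex {Ω E : Type*} {mΩ : MeasurableSpace Ω} [NormedAddCommGroup E]
    [InnerProductSpace ℝ E] [CompleteSpace E] (P : Measure Ω) [IsProbabilityMeasure P]
    {ℱ : ℕ → MeasurableSpace Ω} (hℱ : ∀ t, ℱ t ≤ mΩ) {f : E → ℝ} {f' : E → E} {xstar x₀ : E}
    {L γ μ σ R α : ℝ} {x g : ℕ → Ω → E}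
    (hgrad : ∀ y, HasGradientAt f (f' y) y) (hmin : ∀ y, f xstar ≤ f y) (hγ : 0 < γ) (hμ : 0 < μ)
    (hsqc : ∀ y, f xstar ≥ f y + (1 / γ) * ⟪f' y, xstar - y⟫ + (μ / 2) * ‖y - xstar‖ ^ 2)
    (hsmooth : ∀ y z, ‖f' y - f' z‖ ≤ L * ‖y - z‖) (hL : 0 < L) (hR : ‖x₀ - xstar‖ ≤ R)
    (hα0 : 0 ≤ α) (hαL : α * L ≤ γ) (hα2 : γ * μ * α ≤ 1)
    (hx0 : x 0 = fun _ => x₀) (hstep : ∀ t, x (t + 1) = fun ω => x t ω - α • g t ω)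
    (hx : ∀ t, StronglyMeasurable[ℱ t] (x t)) (hgint : ∀ t, Integrable (g t) P)
    (hgsqint : ∀ t, Integrable (fun ω => ‖g t ω‖ ^ 2) P)
    (hunbiased : ∀ t, P[g t | ℱ t] =ᵐ[P] fun ω => f' (x t ω))
    (hvar : ∀ t, ∀ᵐ ω ∂P, P[fun ω' => ‖g t ω' - f' (x t ω')‖ ^ 2 | ℱ t] ω ≤ σ ^ 2)
    (hfint : ∀ t, Integrable (fun ω => f (x t ω)) P)
    (hsqint : ∀ t, Integrable (fun ω => ‖x t ω - xstar‖ ^ 2) P) (T : ℕ) :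
    ∫ ω, f (x T ω) ∂P - f xstar ≤ L / 2 * ((1 - γ * μ * α) ^ T * R ^ 2 + α * σ ^ 2 / (μ * γ)) := by
  set a : ℕ → ℝ := fun t => ∫ ω, ‖x t ω - xstar‖ ^ 2 ∂P
  have hf' : Continuous f' :=
    (LipschitzWith.of_dist_le' fun y z => by
      simpa only [dist_eq_norm] using hsmooth y z).continuous
  have hrec : ∀ t, a (t + 1) ≤ (1 - γ * μ * α) * a t + α ^ 2 * σ ^ 2 := fun t => by
    simpa only [a, hstep t] using integral_norm_sq_sgd_step_le (hℱ t) hf'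
      (fun y => inner_ge_of_stronglyQuasarConvex hγ (hsqc y))
      (norm_sq_gradient_le_of_lipschitz_gradient hgrad hsmooth hL hmin) hmin hα0 hαL (hx t)
      (hgint t) (hgsqint t) (hunbiased t) (hvar t) (hfint t) (hsqint t)
  have ha0 : a 0 ≤ R ^ 2 + α * σ ^ 2 / (μ * γ) := by
    have : ‖x₀ - xstar‖ ^ 2 ≤ R ^ 2 := pow_le_pow_left₀ (norm_nonneg _) hR 2
    simp only [a, hx0, integral_const, probReal_univ, one_smul]
    linarith [show 0 ≤ α * σ ^ 2 / (μ * γ) by positivity]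
  have haT := le_pow_mul_add_of_le_mul_add (by linarith) (le_of_eq (by field_simp; ring)) ha0 hrec T
  calc ∫ ω, f (x T ω) ∂P - f xstar = ∫ ω, (f (x T ω) - f xstar) ∂P := by
        rw [integral_sub (hfint T) (integrable_const _), integral_const, probReal_univ, one_smul]
    _ ≤ ∫ ω, L / 2 * ‖x T ω - xstar‖ ^ 2 ∂P :=
        integral_mono ((hfint T).sub (integrable_const _)) ((hsqint T).const_mul _)
          fun ω => sub_le_half_mul_norm_sq_of_lipschitz_gradient hgrad hsmooth hmin (x T ω)
    _ = L / 2 * a T := integral_const_mul _ _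
    _ ≤ _ := by gcongr

theorem sgd_strongly_quasar_last_iterate_value :
    ∃ C : ℝ, 0 < C ∧
      ∀ {Ω : Type} [MeasurableSpace Ω] (P : Measure Ω) [IsProbabilityMeasure P]
    {n : ℕ} (f : EuclideanSpace ℝ (Fin n) → ℝ)
    (f' : EuclideanSpace ℝ (Fin n) → EuclideanSpace ℝ (Fin n))
    (xstar x₀ : EuclideanSpace ℝ (Fin n))
    (L γ μ σ R α : ℝ) (T : ℕ)
    (x g : ℕ → Ω → EuclideanSpace ℝ (Fin n))
    (hgrad : ∀ y, HasGradientAt f (f' y) y)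
    (hmin : ∀ y, f xstar ≤ f y)
    (hγ0 : 0 < γ) (hγ1 : γ ≤ 1) (hμ : 0 < μ)
    (hsqc : ∀ y, f xstar ≥ f y + (1/γ) * ⟪f' y, xstar - y⟫ + (μ/2) * ‖y - xstar‖^2)
    (hsmooth : ∀ y z, ‖f' y - f' z‖ ≤ L * ‖y - z‖)
    (hR : ‖x₀ - xstar‖ ≤ R)
    (hσ : 0 < σ)
    (hαdef : α = (1/(μ*γ*(T : ℝ))) * Real.log (μ^2*γ^2*R^2*(T : ℝ)/(2*σ^2)))
    (hα0 : 0 < α) (hα1 : α ≤ γ/L) (hα2 : γ*μ*α ≤ 1)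
    (hTe : μ^2*γ^2*R^2*(T : ℝ) ≥ 2*Real.exp 1*σ^2)
    (hx0 : x 0 = fun _ => x₀)
    (hstep : ∀ t, x (t+1) = fun ω => x t ω - α • g t ω)
    (hgmeas : ∀ t, Measurable (g t))
    (hgint : ∀ t, Integrable (g t) P)
    (hgsqint : ∀ t, Integrable (fun ω => ‖g t ω‖^2) P)
    (hunbiased : ∀ t,
      MeasureTheory.condExp
          (⨆ i ∈ Finset.range t, MeasurableSpace.comap (g i) inferInstance) P (g t)
        =ᵐ[P] fun ω => f' (x t ω))
    (hvar : ∀ t, ∀ᵐ ω ∂P,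
      MeasureTheory.condExp
          (⨆ i ∈ Finset.range t, MeasurableSpace.comap (g i) inferInstance) P
          (fun ω' => ‖g t ω' - f' (x t ω')‖^2) ω ≤ σ^2)
    (hfint : ∀ t, Integrable (fun ω => f (x t ω)) P)
    (hsqint : ∀ t, Integrable (fun ω => ‖x t ω - xstar‖^2) P)
,      ∫ ω, f (x T ω) ∂P - f xstar
        ≤ C * (L*σ^2/(μ^2*γ^2*(T : ℝ))) * (1 + Real.log (μ*γ*R*Real.sqrt (T : ℝ)/σ)) := by
  refine ⟨1, one_pos, ?_⟩
  intro Ω _ P _ n f f' xstar x₀ L γ μ σ R α T x g hgrad hmin hγ0 _ hμ hsqc hsmooth hR hσ hαdef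
    hα0 hα1 hα2 hTe hx0 hstep hgmeas hgint hgsqint hunbiased hvar hfint hsqint
  have hL : 0 < L := (div_pos_iff_of_pos_left hγ0).1 (hα0.trans_le hα1)
  rw [one_mul]
  calc ∫ ω, f (x T ω) ∂P - f xstar
      ≤ L / 2 * ((1 - γ * μ * α) ^ T * R ^ 2 + α * σ ^ 2 / (μ * γ)) :=
        sgd_integral_sub_le_of_stronglyQuasarConvex P (gradientHistory_le hgmeas) hgrad hmin hγ0 hμ hsqc hsmooth hL hR
          hα0.le ((le_div_iff₀ hL).1 hα1) hα2 hx0 hstep (stronglyMeasurable_sgd_iterate hx0 hstep)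
          hgint hgsqint hunbiased hvar hfint hsqint T
    _ ≤ _ := sgd_bound_le_of_step_size hL.le hγ0 hμ hσ (lt_of_lt_of_le (by positivity) hTe)
        hαdef hα2
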